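/- arXiv:2206.06897 — 2 statements merged into one kernel-verified Lean document; each statement's English description precedes it below -/
import Mathlib

section
/- For every p in the closed interval [0,1], min(p, 1-p) ≤ (1/2)·H_b(p), where H_b(p) = -p·log₂ p - (1-p)·log₂(1-p) is the binary entropy function (with the convention 0·log₂ 0 = 0). -/
open Real

lemma kov_aux (p : ℝ) (h0 : 0 ≤ p) (h1 : p ≤ 1/2) :
    2 * p * Real.log 2 ≤ Real.binEntropy p := by
  have hc := Real.strictConcave_binEntropy.concaveOn
  have hx : (0:ℝ) ∈ Set.Icc (0:ℝ) 1 := by norm_num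
  have hy : (2⁻¹:ℝ) ∈ Set.Icc (0:ℝ) 1 := by norm_num
  have ha : (0:ℝ) ≤ 1 - 2*p := by linarith
  have hb : (0:ℝ) ≤ 2*p := by linarith
  have hab : (1 - 2*p) + 2*p = 1 := by ring
  have := hc.2 hx hy ha hb hab
  simp only [smul_eq_mul, mul_zero, Real.binEntropy_zero, Real.binEntropy_two_inv] at this
  have hval : 0 + 2*p * 2⁻¹ = p := by ring
  rw [hval] at this
  linarith [this]

/-- Kovalevskij inequality: `min(p, 1-p) ≤ (1/2)·H_b(p)` for the binary entropy
function `H_b(p) = -p·log₂ p - (1-p)·log₂(1-p)`. -/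
theorem kovalevskij (p : ℝ) (hp : p ∈ Set.Icc (0:ℝ) 1) :
    min p (1 - p) ≤
      (1/2) * (-(p * Real.logb 2 p) - (1 - p) * Real.logb 2 (1 - p)) := by
  obtain ⟨h0, h1⟩ := hp
  have hlog2 : (0:ℝ) < Real.log 2 := Real.log_pos (by norm_num)
  have hrw : -(p * Real.logb 2 p) - (1 - p) * Real.logb 2 (1 - p)
      = Real.binEntropy p / Real.log 2 := by
    rw [Real.binEntropy, Real.log_inv, Real.log_inv, Real.logb, Real.logb]
    field_simp
    ring
  rw [hrw]
  have key : 2 * min p (1 - p) * Real.log 2 ≤ Real.binEntropy p := by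
    rcases le_total p (1/2) with h | h
    · rw [min_eq_left (by linarith)]
      exact kov_aux p h0 h
    · rw [min_eq_right (by linarith)]
      have := kov_aux (1 - p) (by linarith) (by linarith)
      rwa [Real.binEntropy_one_sub] at this
  rw [mul_div_assoc', le_div_iff₀ hlog2]
  nlinarith [key]
end

section
/- For all real numbers x and y, |2·artanh(tanh(x/2)·tanh(y/2))| ≤ min(|x|, |y|). -/
/-- Inverse hyperbolic tangent on `(-1,1)`: `artanh z = (1/2)·ln((1+z)/(1-z))`. -/
noncomputable def artanh (z : ℝ) : ℝ := (1/2) * Real.log ((1 + z) / (1 - z))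

/-!
Write `t = tanh(x/2)` and `s = tanh(y/2)`. Since `|s| < 1`, the product satisfies
`|t s| ≤ |t| ≤ tanh(|x|/2)`, and `artanh` is increasing and inverts `tanh`, so
`|artanh(t s)| ≤ |x|/2`; symmetrically `|artanh(t s)| ≤ |y|/2`.
-/

namespace Real

theorem tanh_le_tanh {a b : ℝ} (hab : a ≤ b) : tanh a ≤ tanh b := by
  by_contra! hlt
  have := artanh_lt_artanh (neg_one_lt_tanh b) (tanh_lt_one a) hlt
  rw [artanh_tanh, artanh_tanh] at this
  linarith

theorem abs_tanh_le_tanh_abs (u : ℝ) : |tanh u| ≤ tanh |u| := by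
  refine abs_le.mpr ⟨?_, tanh_le_tanh (le_abs_self u)⟩
  rw [neg_le, ← tanh_neg]
  exact tanh_le_tanh (neg_le_abs u)

theorem abs_tanh_mul_tanh_le (u v : ℝ) : |tanh u * tanh v| ≤ tanh |u| :=
  calc |tanh u * tanh v| = |tanh u| * |tanh v| := abs_mul _ _
    _ ≤ |tanh u| := mul_le_of_le_one_right (abs_nonneg _) (abs_tanh_lt_one v).le
    _ ≤ tanh |u| := abs_tanh_le_tanh_abs u

theorem abs_artanh_le_of_abs_le_tanh {z c : ℝ} (h : |z| ≤ tanh c) : |artanh z| ≤ c := by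
  obtain ⟨hlow, hup⟩ := abs_le.mp h
  refine abs_le.mpr ⟨?_, ?_⟩
  · calc -c = artanh (tanh (-c)) := (artanh_tanh _).symm
      _ ≤ artanh z := artanh_le_artanh (neg_one_lt_tanh _)
          (hup.trans_lt (tanh_lt_one c)) (by rwa [tanh_neg])
  · calc artanh z ≤ artanh (tanh c) :=
          artanh_le_artanh (by linarith [tanh_lt_one c]) (tanh_lt_one c) hup
      _ = c := artanh_tanh c

end Real

theorem artanh_eq_real_artanh {z : ℝ} (hz : z ∈ Set.Icc (-1) 1) : artanh z = Real.artanh z :=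
  (Real.artanh_eq_half_log hz).symm

/-- The check-node (box-plus) LLR update `F(x,y) = 2·artanh(tanh(x/2)·tanh(y/2))`
is bounded in magnitude by the min-sum approximation `min(|x|,|y|)`. -/
theorem boxplus_le_min (x y : ℝ) :
    |2 * artanh (Real.tanh (x/2) * Real.tanh (y/2))| ≤ min |x| |y| := by
  set z := Real.tanh (x/2) * Real.tanh (y/2)
  have hzx : |z| ≤ Real.tanh |x/2| := Real.abs_tanh_mul_tanh_le _ _
  have hzy : |z| ≤ Real.tanh |y/2| := by
    simpa only [z, mul_comm] using Real.abs_tanh_mul_tanh_le (y/2) (x/2)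
  have hz : z ∈ Set.Icc (-1) 1 := abs_le.mp (hzx.trans (Real.tanh_lt_one _).le)
  have hx := Real.abs_artanh_le_of_abs_le_tanh hzx
  have hy := Real.abs_artanh_le_of_abs_le_tanh hzy
  rw [abs_div, abs_two] at hx hy
  rw [artanh_eq_real_artanh hz, abs_mul, abs_two]
  exact le_min (by linarith) (by linarith)
end
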